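/- Krein conditions for bipartite coherent configurations: Let (β, γ, X_i, Y_j, N_h) be a bipartite coherent configuration equipped with a second basis L_r, R_s, D_h as above, and let the Krein parameters λ_{ij}(h), Δ_{ij}(h), ρ_{ij}(h) be defined by L_i ∘ L_j = (1/|β|) Σ_h λ_{ij}(h) L_h, D_i ∘ D_j = (1/√(|β||γ|)) Σ_h Δ_{ij}(h) D_h, and R_i ∘ R_j = (1/|γ|) Σ_h ρ_{ij}(h) R_h. Then: (i) λ_{ij}(h) ≥ 0 for all 0 ≤ i, j, h ≤ t_β; (ii) ρ_{ij}(h) ≥ 0 for all 0 ≤ i, j, h ≤ t_γ; (iii) λ_{ij}(h) ρ_{ij}(h) ≥ Δ_{ij}(h)² for all 0 ≤ i, j, h ≤ t̃_{βγ}. -/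

import Mathlib

open Matrix

/-- A bipartite coherent configuration on point set `β` and block set `γ`, with
Schur idempotents `X 0, …, X tb` (on `β`), `Y 0, …, Y tg` (on `γ`) and
`N 1, …, N tbg` (from `β` to `γ`), satisfying (C1)–(C6). -/
structure BipartiteCC (β γ : Type) [Fintype β] [DecidableEq β] [Fintype γ] [DecidableEq γ] where
  tb : ℕ
  tg : ℕ
  tbg : ℕ
  tb_pos : 1 ≤ tb
  tg_pos : 1 ≤ tg
  tbg_pos : 1 ≤ tbg
  X : ℕ → Matrix β β ℝ
  Y : ℕ → Matrix γ γ ℝ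
  N : ℕ → Matrix β γ ℝ
  X_zero_one : ∀ i, i ≤ tb → ∀ u v, X i u v = 0 ∨ X i u v = 1
  Y_zero_one : ∀ j, j ≤ tg → ∀ u v, Y j u v = 0 ∨ Y j u v = 1
  N_zero_one : ∀ h, 1 ≤ h → h ≤ tbg → ∀ u v, N h u v = 0 ∨ N h u v = 1
  X_ne_zero : ∀ i, i ≤ tb → X i ≠ 0
  Y_ne_zero : ∀ j, j ≤ tg → Y j ≠ 0
  N_ne_zero : ∀ h, 1 ≤ h → h ≤ tbg → N h ≠ 0
  /-- (C1) -/
  X_zero : X 0 = 1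
  /-- (C1) -/
  Y_zero : Y 0 = 1
  /-- (C2), `ββ` block -/
  X_sum : ∑ i ∈ Finset.range (tb + 1), X i = Matrix.of fun _ _ => (1 : ℝ)
  /-- (C2), `γγ` block -/
  Y_sum : ∑ j ∈ Finset.range (tg + 1), Y j = Matrix.of fun _ _ => (1 : ℝ)
  /-- (C2), `βγ` block -/
  N_sum : ∑ h ∈ Finset.Icc 1 tbg, N h = Matrix.of fun _ _ => (1 : ℝ)
  /-- (C3) -/
  X_transpose : ∀ i, i ≤ tb → ∃ i', i' ≤ tb ∧ (X i)ᵀ = X i'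
  /-- (C3) -/
  Y_transpose : ∀ j, j ≤ tg → ∃ j', j' ≤ tg ∧ (Y j)ᵀ = Y j'
  /-- (C4) -/
  X_mul_X : ∀ i, i ≤ tb → ∀ j, j ≤ tb →
      X i * X j ∈ Submodule.span ℝ {M | ∃ i', i' ≤ tb ∧ M = X i'}
  /-- (C4) -/
  Y_mul_Y : ∀ i, i ≤ tg → ∀ j, j ≤ tg →
      Y i * Y j ∈ Submodule.span ℝ {M | ∃ j', j' ≤ tg ∧ M = Y j'}
  /-- (C4) -/
  X_mul_N : ∀ i, i ≤ tb → ∀ h, 1 ≤ h → h ≤ tbg →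
      X i * N h ∈ Submodule.span ℝ {M | ∃ h', 1 ≤ h' ∧ h' ≤ tbg ∧ M = N h'}
  /-- (C4) -/
  N_mul_Y : ∀ h, 1 ≤ h → h ≤ tbg → ∀ j, j ≤ tg →
      N h * Y j ∈ Submodule.span ℝ {M | ∃ h', 1 ≤ h' ∧ h' ≤ tbg ∧ M = N h'}
  /-- (C4) -/
  N_mul_Nt : ∀ h, 1 ≤ h → h ≤ tbg → ∀ h', 1 ≤ h' → h' ≤ tbg →
      N h * (N h')ᵀ ∈ Submodule.span ℝ {M | ∃ i, i ≤ tb ∧ M = X i}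
  /-- (C4) -/
  Nt_mul_N : ∀ h, 1 ≤ h → h ≤ tbg → ∀ h', 1 ≤ h' → h' ≤ tbg →
      (N h)ᵀ * N h' ∈ Submodule.span ℝ {M | ∃ j, j ≤ tg ∧ M = Y j}
  /-- (C5) -/
  N_comm : ∀ i, 1 ≤ i → i ≤ tbg → ∀ j, 1 ≤ j → j ≤ tbg → N i * (N j)ᵀ = N j * (N i)ᵀ
  /-- (C5) -/
  Nt_comm : ∀ i, 1 ≤ i → i ≤ tbg → ∀ j, 1 ≤ j → j ≤ tbg → (N i)ᵀ * N j = (N j)ᵀ * N i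
  /-- (C6) -/
  X_span : Submodule.span ℝ {M | ∃ i, i ≤ tb ∧ M = X i} =
      Submodule.span ℝ
        (insert 1 {M | ∃ i, 1 ≤ i ∧ i ≤ tbg ∧ ∃ j, 1 ≤ j ∧ j ≤ tbg ∧ M = N i * (N j)ᵀ})
  /-- (C6) -/
  Y_span : Submodule.span ℝ {M | ∃ j, j ≤ tg ∧ M = Y j} =
      Submodule.span ℝ
        (insert 1 {M | ∃ i, 1 ≤ i ∧ i ≤ tbg ∧ ∃ j, 1 ≤ j ∧ j ≤ tbg ∧ M = (N i)ᵀ * N j})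

/-- A second (spectral) basis `L 0, …, L tb`, `R 0, …, R tg`, `D 0, …, D (tbg - 1)` for a
bipartite coherent configuration, satisfying (D1)–(D4). -/
structure SecondBasis {β γ : Type} [Fintype β] [DecidableEq β] [Fintype γ] [DecidableEq γ]
    (cc : BipartiteCC β γ) where
  L : ℕ → Matrix β β ℝ
  R : ℕ → Matrix γ γ ℝ
  D : ℕ → Matrix β γ ℝ
  /-- the `L`'s are linearly independent -/
  L_indep : LinearIndependent ℝ (fun r : Fin (cc.tb + 1) => L r.val)
  /-- the `R`'s are linearly independent -/
  R_indep : LinearIndependent ℝ (fun r : Fin (cc.tg + 1) => R r.val)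
  /-- the `D`'s are linearly independent -/
  D_indep : LinearIndependent ℝ (fun r : Fin cc.tbg => D r.val)
  /-- the `L`'s span the same space as the `X`'s -/
  L_span : Submodule.span ℝ {M | ∃ r, r ≤ cc.tb ∧ M = L r} =
      Submodule.span ℝ {M | ∃ i, i ≤ cc.tb ∧ M = cc.X i}
  /-- the `R`'s span the same space as the `Y`'s -/
  R_span : Submodule.span ℝ {M | ∃ r, r ≤ cc.tg ∧ M = R r} =
      Submodule.span ℝ {M | ∃ j, j ≤ cc.tg ∧ M = cc.Y j}
  /-- the `D`'s span the same space as the `N`'s -/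
  D_span : Submodule.span ℝ {M | ∃ r, r ≤ cc.tbg - 1 ∧ M = D r} =
      Submodule.span ℝ {M | ∃ h, 1 ≤ h ∧ h ≤ cc.tbg ∧ M = cc.N h}
  /-- (D1) -/
  L_mul_L : ∀ r, r ≤ cc.tb → ∀ s, s ≤ cc.tb → L r * L s = if r = s then L r else 0
  /-- (D1) -/
  R_mul_R : ∀ r, r ≤ cc.tg → ∀ s, s ≤ cc.tg → R r * R s = if r = s then R r else 0
  /-- (D2) -/
  L_zero : L 0 = ((Fintype.card β : ℝ))⁻¹ • Matrix.of fun _ _ => (1 : ℝ)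
  /-- (D2) -/
  D_zero : D 0 = (Real.sqrt ((Fintype.card β : ℝ) * (Fintype.card γ : ℝ)))⁻¹ •
      Matrix.of fun _ _ => (1 : ℝ)
  /-- (D2) -/
  R_zero : R 0 = ((Fintype.card γ : ℝ))⁻¹ • Matrix.of fun _ _ => (1 : ℝ)
  /-- (D3) -/
  L_sum : ∑ r ∈ Finset.range (cc.tb + 1), L r = 1
  /-- (D3) -/
  R_sum : ∑ r ∈ Finset.range (cc.tg + 1), R r = 1
  /-- (D4) -/
  L_eq_DDt : ∀ r, r ≤ cc.tbg - 1 → L r = D r * (D r)ᵀ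
  /-- (D4) -/
  R_eq_DtD : ∀ r, r ≤ cc.tbg - 1 → R r = (D r)ᵀ * D r

/-!
The `L r` are orthogonal projections, so `L i ⊙ L j` is positive semidefinite by the Schur
product theorem and `tr ((L i ⊙ L j) * L h) ≥ 0`; by the orthogonality of the `L`'s this trace
is `λ_ij(h) tr (L h) / |β|`, which gives (i), and (ii) is the same argument for the `R`'s.
For (iii), `D r * R r = D r` makes `M r = [[L r, D r], [(D r)ᵀ, R r]] = K Kᵀ` with
`K = [D r; R r]`, so `M i ⊙ M j` is positive semidefinite too; pairing it with
`[x • D h; R h] [x • D h; R h]ᵀ` gives a quadratic in `x` that is nonnegative everywhere, and its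
discriminant, read through the orthogonality of the `D`'s, is (iii).

The index ranges fit because `t̃_{βγ} ≤ t_β, t_γ`: the `D`'s are independent in `span N`, which
by (C4)–(C5) is the sum of the at most one-dimensional spaces `L r * span N`.
-/

theorem LinearMap.apply₂_mem_of_mem_span {R M N P : Type*} [CommSemiring R] [AddCommMonoid M]
    [AddCommMonoid N] [AddCommMonoid P] [Module R M] [Module R N] [Module R P]
    (f : M →ₗ[R] N →ₗ[R] P) {s : Set M} {t : Set N} {U : Submodule R P}
    (h : ∀ a ∈ s, ∀ b ∈ t, f a b ∈ U) {a : M} {b : N} (ha : a ∈ Submodule.span R s)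
    (hb : b ∈ Submodule.span R t) : f a b ∈ U := by
  have hab := Submodule.apply_mem_map₂ f ha hb
  rw [Submodule.map₂_span_span] at hab
  exact Submodule.span_le.2 (Set.image2_subset_iff.2 h) hab

theorem LinearMap.apply₂_eq_of_mem_span {R M N P : Type*} [CommRing R] [AddCommGroup M]
    [AddCommGroup N] [AddCommGroup P] [Module R M] [Module R N] [Module R P]
    (f g : M →ₗ[R] N →ₗ[R] P) {s : Set M} {t : Set N}
    (h : ∀ a ∈ s, ∀ b ∈ t, f a b = g a b) {a : M} {b : N} (ha : a ∈ Submodule.span R s)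
    (hb : b ∈ Submodule.span R t) : f a b = g a b := by
  have := (f - g).apply₂_mem_of_mem_span (U := ⊥)
    (fun a ha b hb => by simp [h a ha b hb]) ha hb
  simpa [sub_eq_zero] using this

namespace Matrix

variable {m n k : Type*} [Fintype m] [Fintype n] [Fintype k]

omit [Fintype m] in
theorem mul_transpose_self_eq_zero {A : Matrix m n ℝ} : A * Aᵀ = 0 ↔ A = 0 := by
  rw [← conjTranspose_eq_transpose_of_trivial A, self_mul_conjTranspose_eq_zero]

theorem trace_mul_transpose_self_pos {A : Matrix m n ℝ} (hA : A ≠ 0) : 0 < trace (A * Aᵀ) := by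
  rw [← conjTranspose_eq_transpose_of_trivial]
  exact (posSemidef_self_mul_conjTranspose A).trace_nonneg.lt_of_ne'
    (trace_mul_conjTranspose_self_eq_zero_iff.not.2 hA)

theorem mul_transpose_mul_self_of_isIdempotentElem {D : Matrix m n ℝ}
    (hD : IsIdempotentElem (D * Dᵀ)) : D * Dᵀ * D = D := by
  have hE : (D * Dᵀ * D - D) * (D * Dᵀ * D - D)ᵀ = 0 :=
    calc _ = D * Dᵀ * (D * Dᵀ) * (D * Dᵀ) - 2 • (D * Dᵀ * (D * Dᵀ)) + D * Dᵀ := by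
          simp only [transpose_sub, transpose_mul, transpose_transpose, Matrix.sub_mul,
            Matrix.mul_sub, Matrix.mul_assoc, two_smul]
          abel
      _ = 0 := by rw [hD.eq, hD.eq, two_smul]; abel
  rwa [mul_transpose_self_eq_zero, sub_eq_zero] at hE

theorem trace_fromBlocks {α : Type*} [AddCommMonoid α] (A : Matrix m m α) (B : Matrix m n α)
    (C : Matrix n m α) (D : Matrix n n α) : trace (fromBlocks A B C D) = trace A + trace D := by
  simp [trace, Fintype.sum_sum_type]

omit [Fintype m] [Fintype n] in
theorem hadamard_fromBlocks {α : Type*} [Mul α] (A A' : Matrix m m α) (B B' : Matrix m n α)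
    (C C' : Matrix n m α) (D D' : Matrix n n α) :
    fromBlocks A B C D ⊙ fromBlocks A' B' C' D' =
      fromBlocks (A ⊙ A') (B ⊙ B') (C ⊙ C') (D ⊙ D') := by
  ext (i | i) (j | j) <;> rfl

theorem PosSemidef.trace_mul_mul_transpose_nonneg {P : Matrix m m ℝ} (hP : P.PosSemidef)
    (G : Matrix m k ℝ) : 0 ≤ trace (P * (G * Gᵀ)) := by
  rw [← Matrix.mul_assoc, trace_mul_comm, ← Matrix.mul_assoc,
    ← conjTranspose_eq_transpose_of_trivial]
  exact (hP.conjTranspose_mul_mul_same G).trace_nonneg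

theorem PosSemidef.sq_trace_mul_le {A : Matrix m m ℝ} {B : Matrix m n ℝ}
    {C : Matrix n n ℝ} (hP : (fromBlocks A B Bᵀ C).PosSemidef) (G : Matrix m k ℝ)
    (H : Matrix n k ℝ) :
    trace (B * (H * Gᵀ)) ^ 2 ≤ trace (A * (G * Gᵀ)) * trace (C * (H * Hᵀ)) := by
  have hquad : ∀ x : ℝ, 0 ≤ trace (A * (G * Gᵀ)) * (x * x) + 2 * trace (B * (H * Gᵀ)) * x
      + trace (C * (H * Hᵀ)) := by
    intro x
    have hx := hP.trace_mul_mul_transpose_nonneg (fromRows (x • G) H)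
    have hBt : trace (Bᵀ * (G * Hᵀ)) = trace (B * (H * Gᵀ)) := by
      rw [← trace_transpose, trace_mul_comm]
      simp only [transpose_mul, transpose_transpose]
    rw [transpose_fromRows, fromRows_mul_fromCols, fromBlocks_multiply, trace_fromBlocks] at hx
    simp only [transpose_smul, Matrix.smul_mul, Matrix.mul_smul, smul_smul, trace_add, trace_smul,
      smul_eq_mul, hBt] at hx
    linarith
  have := discrim_le_zero hquad
  rw [discrim] at this
  nlinarith

theorem trace_smul_sum_mul_transpose {V : ℕ → Matrix m n ℝ} {t h : ℕ} (hh : h < t)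
    (horth : ∀ s < t, s ≠ h → trace (V s * (V h)ᵀ) = 0) (c : ℝ) (a : ℕ → ℝ) :
    trace ((c • ∑ s ∈ Finset.range t, a s • V s) * (V h)ᵀ) = c * a h * trace (V h * (V h)ᵀ) := by
  rw [Matrix.smul_mul, Matrix.sum_mul, trace_smul, trace_sum,
    Finset.sum_eq_single_of_mem h (Finset.mem_range.2 hh)
      fun s hs hne => by rw [Matrix.smul_mul, trace_smul, horth s (Finset.mem_range.1 hs) hne,
        smul_zero]]
  simp only [Matrix.smul_mul, trace_smul, smul_eq_mul, mul_assoc]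

theorem exists_eq_smul_of_mul_transpose_eq_smul {P : Matrix m m ℝ}
    {S : Submodule ℝ (Matrix m n ℝ)}
    (hmul : ∀ A ∈ S, ∀ B ∈ S, P * A = A → P * B = B → ∃ c : ℝ, A * Bᵀ = c • P)
    (hcomm : ∀ A ∈ S, ∀ B ∈ S, Aᵀ * B = Bᵀ * A) {A B : Matrix m n ℝ} (hA : A ∈ S) (hB : B ∈ S)
    (hPA : P * A = A) (hPB : P * B = B) (hA0 : A ≠ 0) : ∃ t : ℝ, B = t • A := by
  obtain ⟨a, ha⟩ := hmul A hA A hA hPA hPA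
  obtain ⟨c, hc⟩ := hmul A hA B hB hPA hPB
  have ha0 : a ≠ 0 := by
    rintro rfl
    rw [zero_smul, mul_transpose_self_eq_zero] at ha
    exact hA0 ha
  refine ⟨c / a, sub_eq_zero.1 ?_⟩
  set E := B - (c / a) • A
  have hES : E ∈ S := S.sub_mem hB (S.smul_mem _ hA)
  have hPE : P * E = E := by simp only [E, Matrix.mul_sub, Matrix.mul_smul, hPA, hPB]
  have hAE : A * Eᵀ = 0 := by
    rw [transpose_sub, transpose_smul, Matrix.mul_sub, Matrix.mul_smul, ha, hc, smul_smul,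
      div_mul_cancel₀ c ha0, sub_self]
  -- `Aᵀ * E` is symmetric by `hcomm` and squares to `Aᵀ * (A * Eᵀ)ᵀ * E = 0`.
  have hM : Aᵀ * E = 0 := by
    rw [← mul_transpose_self_eq_zero, transpose_mul, transpose_transpose, ← hcomm A hA E hES,
      Matrix.mul_assoc, ← Matrix.mul_assoc E, ← transpose_transpose (E * Aᵀ), transpose_mul,
      transpose_transpose, hAE, transpose_zero, Matrix.zero_mul, Matrix.mul_zero]
  have : a • E = 0 := by
    rw [← hPE, ← Matrix.smul_mul, ← ha, Matrix.mul_assoc, hM, Matrix.mul_zero]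
  exact (smul_eq_zero.1 this).resolve_left ha0

theorem exists_forall_mul_eq_smul {P : Matrix m m ℝ} {S : Submodule ℝ (Matrix m n ℝ)}
    (hP : IsIdempotentElem P) (hPS : ∀ A ∈ S, P * A ∈ S)
    (hmul : ∀ A ∈ S, ∀ B ∈ S, P * A = A → P * B = B → ∃ c : ℝ, A * Bᵀ = c • P)
    (hcomm : ∀ A ∈ S, ∀ B ∈ S, Aᵀ * B = Bᵀ * A) :
    ∃ v : Matrix m n ℝ, ∀ A ∈ S, ∃ c : ℝ, P * A = c • v := by
  have hPP : ∀ A : Matrix m n ℝ, P * (P * A) = P * A := fun A => by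
    rw [← Matrix.mul_assoc, hP.eq]
  by_cases h : ∃ A ∈ S, P * A ≠ 0
  · obtain ⟨A₀, hA₀, hne⟩ := h
    refine ⟨P * A₀, fun A hA => ?_⟩
    exact exists_eq_smul_of_mul_transpose_eq_smul hmul hcomm (hPS A₀ hA₀) (hPS A hA) (hPP A₀)
      (hPP A) hne
  · push Not at h
    exact ⟨0, fun A hA => ⟨0, by rw [h A hA, smul_zero]⟩⟩

section OrthogonalIdempotents

variable {t : ℕ} {L : ℕ → Matrix m m ℝ}

theorem mul_transpose_self_of_orthogonal
    (hL : ∀ r ≤ t, ∀ s ≤ t, L r * L s = if r = s then L r else 0)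
    (hsymm : ∀ r ≤ t, (L r)ᵀ = L r) {r : ℕ} (hr : r ≤ t) : L r * (L r)ᵀ = L r := by
  rw [hsymm r hr, hL r hr r hr, if_pos rfl]

theorem posSemidef_of_orthogonal
    (hL : ∀ r ≤ t, ∀ s ≤ t, L r * L s = if r = s then L r else 0)
    (hsymm : ∀ r ≤ t, (L r)ᵀ = L r) {r : ℕ} (hr : r ≤ t) : (L r).PosSemidef := by
  rw [← mul_transpose_self_of_orthogonal hL hsymm hr, ← conjTranspose_eq_transpose_of_trivial]
  exact posSemidef_self_mul_conjTranspose _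

theorem trace_smul_sum_mul_transpose_of_orthogonal
    (hL : ∀ r ≤ t, ∀ s ≤ t, L r * L s = if r = s then L r else 0)
    (hsymm : ∀ r ≤ t, (L r)ᵀ = L r) {h : ℕ} (hh : h ≤ t) (c : ℝ) (a : ℕ → ℝ) :
    trace ((c • ∑ s ∈ Finset.range (t + 1), a s • L s) * (L h)ᵀ) = c * a h * trace (L h) := by
  rw [trace_smul_sum_mul_transpose (Nat.lt_succ_of_le hh),
    mul_transpose_self_of_orthogonal hL hsymm hh]
  intro s hs hne
  rw [hsymm h hh, hL s (Nat.lt_succ_iff.1 hs) h hh, if_neg hne, trace_zero]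

theorem trace_pos_of_orthogonal
    (hL : ∀ r ≤ t, ∀ s ≤ t, L r * L s = if r = s then L r else 0)
    (hsymm : ∀ r ≤ t, (L r)ᵀ = L r) {r : ℕ} (hr : r ≤ t) (hLr : L r ≠ 0) : 0 < trace (L r) := by
  simpa [mul_transpose_self_of_orthogonal hL hsymm hr] using trace_mul_transpose_self_pos hLr

theorem nonneg_of_hadamard_eq_smul_sum
    (hL : ∀ r ≤ t, ∀ s ≤ t, L r * L s = if r = s then L r else 0)
    (hsymm : ∀ r ≤ t, (L r)ᵀ = L r) {i j h : ℕ} (hi : i ≤ t) (hj : j ≤ t) (hh : h ≤ t)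
    (hLh : L h ≠ 0) {c : ℝ} (hc : 0 < c) {a : ℕ → ℝ}
    (hij : L i ⊙ L j = c • ∑ s ∈ Finset.range (t + 1), a s • L s) : 0 ≤ a h := by
  have hnonneg := ((posSemidef_of_orthogonal hL hsymm hi).hadamard
    (posSemidef_of_orthogonal hL hsymm hj)).trace_mul_mul_transpose_nonneg (L h)
  rw [mul_transpose_self_of_orthogonal hL hsymm hh, ← hsymm h hh, hij,
    trace_smul_sum_mul_transpose_of_orthogonal hL hsymm hh] at hnonneg
  exact nonneg_of_mul_nonneg_right
    (nonneg_of_mul_nonneg_left hnonneg (trace_pos_of_orthogonal hL hsymm hh hLh)) hc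

theorem exists_mul_transpose_eq_smul_of_orthogonal
    (hL : ∀ r ≤ t, ∀ s ≤ t, L r * L s = if r = s then L r else 0)
    (hsymm : ∀ r ≤ t, (L r)ᵀ = L r) {r : ℕ} (hr : r ≤ t) {A B : Matrix m n ℝ}
    (hAB : A * Bᵀ ∈ Submodule.span ℝ {M | ∃ s, s ≤ t ∧ M = L s}) (hA : L r * A = A)
    (hB : L r * B = B) : ∃ c : ℝ, A * Bᵀ = c • L r := by
  have hsandwich : A * Bᵀ ∈ (ℝ ∙ L r).comap
      (mulLeftLinearMap m ℝ (L r) ∘ₗ mulRightLinearMap m ℝ (L r)) := by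
    refine Submodule.span_le.2 ?_ hAB
    rintro _ ⟨s, hs, rfl⟩
    simp only [SetLike.mem_coe, Submodule.mem_comap, LinearMap.comp_apply,
      mulRightLinearMap_apply, mulLeftLinearMap_apply, ← Matrix.mul_assoc, hL r hr s hs]
    split_ifs with hrs
    · rw [hrs, hL s hs s hs, if_pos rfl]
      exact Submodule.mem_span_singleton_self _
    · rw [Matrix.zero_mul]
      exact Submodule.zero_mem _
  obtain ⟨c, hc⟩ := Submodule.mem_span_singleton.1 hsandwich
  refine ⟨c, ?_⟩
  calc A * Bᵀ = L r * A * (L r * B)ᵀ := by rw [hA, hB]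
    _ = c • L r := by
      rw [hc, transpose_mul, hsymm r hr]
      simp only [LinearMap.comp_apply, mulRightLinearMap_apply, mulLeftLinearMap_apply,
        Matrix.mul_assoc]

theorem card_le_of_orthogonal [DecidableEq m]
    (hL : ∀ r ≤ t, ∀ s ≤ t, L r * L s = if r = s then L r else 0)
    (hsymm : ∀ r ≤ t, (L r)ᵀ = L r) (hsum : ∑ r ∈ Finset.range (t + 1), L r = 1)
    {S : Submodule ℝ (Matrix m n ℝ)} (hLS : ∀ r ≤ t, ∀ A ∈ S, L r * A ∈ S)
    (hmul : ∀ A ∈ S, ∀ B ∈ S, A * Bᵀ ∈ Submodule.span ℝ {M | ∃ r, r ≤ t ∧ M = L r})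
    (hcomm : ∀ A ∈ S, ∀ B ∈ S, Aᵀ * B = Bᵀ * A) {k : ℕ} {D : Fin k → Matrix m n ℝ}
    (hD : ∀ i, D i ∈ S) (hind : LinearIndependent ℝ D) : k ≤ t + 1 := by
  classical
  have hline : ∀ r, ∃ v : Matrix m n ℝ, r ≤ t → ∀ A ∈ S, ∃ c : ℝ, L r * A = c • v := by
    intro r
    by_cases hr : r ≤ t
    · obtain ⟨v, hv⟩ := exists_forall_mul_eq_smul
        (by simpa using hL r hr r hr : L r * L r = L r) (hLS r hr)
        (fun A hA B hB hA' hB' =>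
          exists_mul_transpose_eq_smul_of_orthogonal hL hsymm hr (hmul A hA B hB) hA' hB')
        hcomm
      exact ⟨v, fun _ => hv⟩
    · exact ⟨0, fun h => absurd h hr⟩
  choose w hw using hline
  have hspan : Submodule.span ℝ (Set.range D) ≤
      Submodule.span ℝ ((Finset.range (t + 1)).image w : Set (Matrix m n ℝ)) := by
    refine Submodule.span_le.2 ?_
    rintro _ ⟨i, rfl⟩
    rw [SetLike.mem_coe, ← Matrix.one_mul (D i), ← hsum, Matrix.sum_mul]
    refine Submodule.sum_mem _ fun r hr => ?_
    obtain ⟨c, hc⟩ := hw r (Nat.lt_succ_iff.1 (Finset.mem_range.1 hr)) (D i) (hD i)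
    rw [hc]
    exact Submodule.smul_mem _ _
      (Submodule.subset_span (Finset.mem_coe.2 (Finset.mem_image_of_mem w hr)))
  calc k = Module.finrank ℝ (Submodule.span ℝ (Set.range D)) := by
        rw [finrank_span_eq_card hind, Fintype.card_fin]
    _ ≤ ((Finset.range (t + 1)).image w).card :=
        (Submodule.finrank_mono hspan).trans (finrank_span_finset_le_card _)
    _ ≤ t + 1 := Finset.card_image_le.trans (Finset.card_range _).le

end OrthogonalIdempotents

end Matrix

namespace BipartiteCC

variable {β γ : Type} [Fintype β] [DecidableEq β] [Fintype γ] [DecidableEq γ]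
  (cc : BipartiteCC β γ)

def spanX : Submodule ℝ (Matrix β β ℝ) := Submodule.span ℝ {M | ∃ i, i ≤ cc.tb ∧ M = cc.X i}

def spanY : Submodule ℝ (Matrix γ γ ℝ) := Submodule.span ℝ {M | ∃ j, j ≤ cc.tg ∧ M = cc.Y j}

def spanN : Submodule ℝ (Matrix β γ ℝ) :=
  Submodule.span ℝ {M | ∃ h, 1 ≤ h ∧ h ≤ cc.tbg ∧ M = cc.N h}

variable {cc}

theorem transpose_eq_of_mem_spanX {M : Matrix β β ℝ} (hM : M ∈ cc.spanX) : Mᵀ = M := by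
  rw [spanX, cc.X_span] at hM
  refine LinearMap.eqOn_span' (f := (transposeLinearEquiv β β ℝ ℝ).toLinearMap)
    (g := LinearMap.id) ?_ hM
  rintro _ (rfl | ⟨i, hi, hi', j, hj, hj', rfl⟩)
  · exact transpose_one
  · simpa using cc.N_comm j hj hj' i hi hi'

theorem transpose_eq_of_mem_spanY {M : Matrix γ γ ℝ} (hM : M ∈ cc.spanY) : Mᵀ = M := by
  rw [spanY, cc.Y_span] at hM
  refine LinearMap.eqOn_span' (f := (transposeLinearEquiv γ γ ℝ ℝ).toLinearMap)
    (g := LinearMap.id) ?_ hM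
  rintro _ (rfl | ⟨i, hi, hi', j, hj, hj', rfl⟩)
  · exact transpose_one
  · simpa using cc.Nt_comm j hj hj' i hi hi'

theorem mul_mem_spanN_of_mem_spanX {M : Matrix β β ℝ} {A : Matrix β γ ℝ} (hM : M ∈ cc.spanX)
    (hA : A ∈ cc.spanN) : M * A ∈ cc.spanN :=
  (mulLinearMap ℝ).apply₂_mem_of_mem_span
    (by rintro _ ⟨i, hi, rfl⟩ _ ⟨h, hh, hh', rfl⟩; exact cc.X_mul_N i hi h hh hh') hM hA

theorem mul_mem_spanN_of_mem_spanY {A : Matrix β γ ℝ} {M : Matrix γ γ ℝ} (hA : A ∈ cc.spanN)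
    (hM : M ∈ cc.spanY) : A * M ∈ cc.spanN :=
  (mulLinearMap ℝ).apply₂_mem_of_mem_span
    (by rintro _ ⟨h, hh, hh', rfl⟩ _ ⟨j, hj, rfl⟩; exact cc.N_mul_Y h hh hh' j hj) hA hM

theorem mul_transpose_mem_spanX {A B : Matrix β γ ℝ} (hA : A ∈ cc.spanN) (hB : B ∈ cc.spanN) :
    A * Bᵀ ∈ cc.spanX :=
  ((mulLinearMap ℝ).compl₂ (transposeLinearEquiv β γ ℝ ℝ).toLinearMap).apply₂_mem_of_mem_span
    (by rintro _ ⟨h, hh, hh', rfl⟩ _ ⟨h', hh₁, hh₁', rfl⟩; exact cc.N_mul_Nt h hh hh' h' hh₁ hh₁')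
    hA hB

theorem transpose_mul_mem_spanY {A B : Matrix β γ ℝ} (hA : A ∈ cc.spanN) (hB : B ∈ cc.spanN) :
    Aᵀ * B ∈ cc.spanY :=
  ((mulLinearMap ℝ).comp (transposeLinearEquiv β γ ℝ ℝ).toLinearMap).apply₂_mem_of_mem_span
    (by rintro _ ⟨h, hh, hh', rfl⟩ _ ⟨h', hh₁, hh₁', rfl⟩; exact cc.Nt_mul_N h hh hh' h' hh₁ hh₁')
    hA hB

theorem mul_transpose_comm {A B : Matrix β γ ℝ} (hA : A ∈ cc.spanN) (hB : B ∈ cc.spanN) :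
    A * Bᵀ = B * Aᵀ :=
  LinearMap.apply₂_eq_of_mem_span
    ((mulLinearMap ℝ).compl₂ (transposeLinearEquiv β γ ℝ ℝ).toLinearMap)
    ((mulLinearMap ℝ).compl₂ (transposeLinearEquiv β γ ℝ ℝ).toLinearMap).flip
    (by rintro _ ⟨h, hh, hh', rfl⟩ _ ⟨h', hh₁, hh₁', rfl⟩; exact cc.N_comm h hh hh' h' hh₁ hh₁')
    hA hB

theorem transpose_mul_comm {A B : Matrix β γ ℝ} (hA : A ∈ cc.spanN) (hB : B ∈ cc.spanN) :
    Aᵀ * B = Bᵀ * A :=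
  LinearMap.apply₂_eq_of_mem_span
    ((mulLinearMap ℝ).comp (transposeLinearEquiv β γ ℝ ℝ).toLinearMap)
    ((mulLinearMap ℝ).comp (transposeLinearEquiv β γ ℝ ℝ).toLinearMap).flip
    (by rintro _ ⟨h, hh, hh', rfl⟩ _ ⟨h', hh₁, hh₁', rfl⟩; exact cc.Nt_comm h hh hh' h' hh₁ hh₁')
    hA hB

end BipartiteCC

namespace SecondBasis

variable {β γ : Type} [Fintype β] [DecidableEq β] [Fintype γ] [DecidableEq γ]
  {cc : BipartiteCC β γ}

section

variable (sb : SecondBasis cc)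

theorem L_mem_spanX {r : ℕ} (hr : r ≤ cc.tb) : sb.L r ∈ cc.spanX := by
  rw [BipartiteCC.spanX, ← sb.L_span]
  exact Submodule.subset_span ⟨r, hr, rfl⟩

theorem R_mem_spanY {r : ℕ} (hr : r ≤ cc.tg) : sb.R r ∈ cc.spanY := by
  rw [BipartiteCC.spanY, ← sb.R_span]
  exact Submodule.subset_span ⟨r, hr, rfl⟩

theorem D_mem_spanN {r : ℕ} (hr : r ≤ cc.tbg - 1) : sb.D r ∈ cc.spanN := by
  rw [BipartiteCC.spanN, ← sb.D_span]
  exact Submodule.subset_span ⟨r, hr, rfl⟩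

theorem L_transpose {r : ℕ} (hr : r ≤ cc.tb) : (sb.L r)ᵀ = sb.L r :=
  BipartiteCC.transpose_eq_of_mem_spanX (sb.L_mem_spanX hr)

theorem R_transpose {r : ℕ} (hr : r ≤ cc.tg) : (sb.R r)ᵀ = sb.R r :=
  BipartiteCC.transpose_eq_of_mem_spanY (sb.R_mem_spanY hr)

end

theorem tbg_le_tb_add_one (sb : SecondBasis cc) : cc.tbg ≤ cc.tb + 1 :=
  card_le_of_orthogonal sb.L_mul_L (fun _ => sb.L_transpose) sb.L_sum (S := cc.spanN)
    (fun _ hr _ hA => BipartiteCC.mul_mem_spanN_of_mem_spanX (sb.L_mem_spanX hr) hA)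
    (fun _ hA _ hB => sb.L_span ▸ BipartiteCC.mul_transpose_mem_spanX hA hB)
    (fun _ hA _ hB => BipartiteCC.transpose_mul_comm hA hB)
    (fun i => sb.D_mem_spanN (Nat.le_sub_one_of_lt i.isLt)) sb.D_indep

theorem tbg_le_tg_add_one (sb : SecondBasis cc) : cc.tbg ≤ cc.tg + 1 := by
  refine card_le_of_orthogonal sb.R_mul_R (fun _ => sb.R_transpose) sb.R_sum
    (S := cc.spanN.map (transposeLinearEquiv β γ ℝ ℝ).toLinearMap) ?_ ?_ ?_
    (fun i => Submodule.mem_map_of_mem (sb.D_mem_spanN (Nat.le_sub_one_of_lt i.isLt)))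
    (sb.D_indep.map' _ (transposeLinearEquiv β γ ℝ ℝ).ker)
  · rintro r hr _ ⟨A, hA, rfl⟩
    refine ⟨A * sb.R r, BipartiteCC.mul_mem_spanN_of_mem_spanY hA (sb.R_mem_spanY hr), ?_⟩
    simp [sb.R_transpose hr]
  · rintro _ ⟨A, hA, rfl⟩ _ ⟨B, hB, rfl⟩
    simpa [sb.R_span, BipartiteCC.spanY] using BipartiteCC.transpose_mul_mem_spanY hA hB
  · rintro _ ⟨A, hA, rfl⟩ _ ⟨B, hB, rfl⟩
    simpa using BipartiteCC.mul_transpose_comm hA hB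

variable (sb : SecondBasis cc)

theorem L_mul_D {r : ℕ} (hr : r ≤ cc.tbg - 1) : sb.L r * sb.D r = sb.D r := by
  have hrb : r ≤ cc.tb := by have := sb.tbg_le_tb_add_one; omega
  rw [sb.L_eq_DDt r hr]
  refine mul_transpose_mul_self_of_isIdempotentElem ?_
  simpa [IsIdempotentElem, ← sb.L_eq_DDt r hr] using sb.L_mul_L r hrb r hrb

theorem D_mul_R {r : ℕ} (hr : r ≤ cc.tbg - 1) : sb.D r * sb.R r = sb.D r := by
  rw [sb.R_eq_DtD r hr, ← Matrix.mul_assoc, ← sb.L_eq_DDt r hr, sb.L_mul_D hr]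

theorem trace_R {r : ℕ} (hr : r ≤ cc.tbg - 1) : trace (sb.R r) = trace (sb.L r) := by
  rw [sb.R_eq_DtD r hr, sb.L_eq_DDt r hr, trace_mul_comm]

theorem trace_smul_sum_D_mul_transpose {h : ℕ} (hh : h ≤ cc.tbg - 1) (c : ℝ) (a : ℕ → ℝ) :
    trace ((c • ∑ s ∈ Finset.range cc.tbg, a s • sb.D s) * (sb.D h)ᵀ) =
      c * a h * trace (sb.L h) := by
  have htb := sb.tbg_le_tb_add_one
  rw [trace_smul_sum_mul_transpose (by have := cc.tbg_pos; omega), ← sb.L_eq_DDt h hh]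
  intro s hs hne
  have hs' : s ≤ cc.tbg - 1 := by omega
  calc trace (sb.D s * (sb.D h)ᵀ) = trace (sb.L s * sb.D s * (sb.L h * sb.D h)ᵀ) := by
        rw [sb.L_mul_D hs', sb.L_mul_D hh]
    _ = trace (sb.L h * sb.L s * (sb.D s * (sb.D h)ᵀ)) := by
        rw [transpose_mul, sb.L_transpose (by omega), ← Matrix.mul_assoc, trace_mul_comm]
        simp only [Matrix.mul_assoc]
    _ = 0 := by
        rw [sb.L_mul_L h (by omega) s (by omega), if_neg (Ne.symm hne), Matrix.zero_mul,
          trace_zero]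

theorem posSemidef_fromBlocks {r : ℕ} (hr : r ≤ cc.tbg - 1) :
    (fromBlocks (sb.L r) (sb.D r) (sb.D r)ᵀ (sb.R r)).PosSemidef := by
  have hrg : r ≤ cc.tg := by have := sb.tbg_le_tg_add_one; omega
  have hK : fromBlocks (sb.L r) (sb.D r) (sb.D r)ᵀ (sb.R r) =
      fromRows (sb.D r) (sb.R r) * (fromRows (sb.D r) (sb.R r))ᵀ := by
    rw [transpose_fromRows, fromRows_mul_fromCols, sb.R_transpose hrg, sb.D_mul_R hr,
      ← sb.L_eq_DDt r hr, sb.R_mul_R r hrg r hrg, if_pos rfl, ← sb.R_transpose hrg,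
      ← transpose_mul, sb.D_mul_R hr]
  rw [hK, ← conjTranspose_eq_transpose_of_trivial]
  exact posSemidef_self_mul_conjTranspose _

theorem sq_trace_hadamard_D_le {i j h : ℕ} (hi : i ≤ cc.tbg - 1) (hj : j ≤ cc.tbg - 1)
    (hh : h ≤ cc.tbg - 1) :
    trace ((sb.D i ⊙ sb.D j) * (sb.D h)ᵀ) ^ 2 ≤
      trace ((sb.L i ⊙ sb.L j) * (sb.L h)ᵀ) * trace ((sb.R i ⊙ sb.R j) * (sb.R h)ᵀ) := by
  have hhb : h ≤ cc.tb := by have := sb.tbg_le_tb_add_one; omega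
  have hhg : h ≤ cc.tg := by have := sb.tbg_le_tg_add_one; omega
  have hP := (sb.posSemidef_fromBlocks hi).hadamard (sb.posSemidef_fromBlocks hj)
  rw [hadamard_fromBlocks, ← transpose_hadamard] at hP
  have hRD : sb.R h * (sb.D h)ᵀ = (sb.D h)ᵀ := by
    rw [← sb.R_transpose hhg, ← transpose_mul, sb.D_mul_R hh]
  have hRR : sb.R h * (sb.R h)ᵀ = (sb.R h)ᵀ := by
    rw [sb.R_transpose hhg, sb.R_mul_R h hhg h hhg, if_pos rfl]
  have key := hP.sq_trace_mul_le (sb.D h) (sb.R h)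
  rwa [hRD, hRR, ← sb.L_eq_DDt h hh, ← sb.L_transpose hhb] at key

end SecondBasis

theorem sq_le_mul_of_scaled_sq_le {b g T x y z : ℝ} (hb : 0 < b) (hg : 0 < g) (hT : T ≠ 0)
    (h : ((√(b * g))⁻¹ * x * T) ^ 2 ≤ (b⁻¹ * y * T) * (g⁻¹ * z * T)) : x ^ 2 ≤ y * z := by
  have hscale : 0 < T ^ 2 / (b * g) := by positivity
  refine le_of_mul_le_mul_right ?_ hscale
  calc x ^ 2 * (T ^ 2 / (b * g)) = ((√(b * g))⁻¹ * x * T) ^ 2 := by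
        rw [mul_pow, mul_pow, inv_pow, Real.sq_sqrt (by positivity)]
        ring
    _ ≤ (b⁻¹ * y * T) * (g⁻¹ * z * T) := h
    _ = y * z * (T ^ 2 / (b * g)) := by field_simp

/-- the Krein conditions for bipartite coherent configurations:
`λ i j h ≥ 0`, `ρ i j h ≥ 0`, and `λ i j h * ρ i j h ≥ (Δ i j h)²`. -/
theorem bipartiteCC_krein_conditions (β γ : Type) [Fintype β] [DecidableEq β]
    [Nonempty β] [Fintype γ] [DecidableEq γ] [Nonempty γ]
    (cc : BipartiteCC β γ) (sb : SecondBasis cc)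
    (lam Del rho : ℕ → ℕ → ℕ → ℝ)
    (hlam : ∀ i, i ≤ cc.tb → ∀ j, j ≤ cc.tb →
      Matrix.hadamard (sb.L i) (sb.L j) =
        ((Fintype.card β : ℝ))⁻¹ • ∑ h ∈ Finset.range (cc.tb + 1), lam i j h • sb.L h)
    (hDel : ∀ i, i ≤ cc.tbg - 1 → ∀ j, j ≤ cc.tbg - 1 →
      Matrix.hadamard (sb.D i) (sb.D j) =
        (Real.sqrt ((Fintype.card β : ℝ) * (Fintype.card γ : ℝ)))⁻¹ •
          ∑ h ∈ Finset.range cc.tbg, Del i j h • sb.D h)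
    (hrho : ∀ i, i ≤ cc.tg → ∀ j, j ≤ cc.tg →
      Matrix.hadamard (sb.R i) (sb.R j) =
        ((Fintype.card γ : ℝ))⁻¹ • ∑ h ∈ Finset.range (cc.tg + 1), rho i j h • sb.R h) :
    (∀ i, i ≤ cc.tb → ∀ j, j ≤ cc.tb → ∀ h, h ≤ cc.tb → 0 ≤ lam i j h) ∧
    (∀ i, i ≤ cc.tg → ∀ j, j ≤ cc.tg → ∀ h, h ≤ cc.tg → 0 ≤ rho i j h) ∧
    (∀ i, i ≤ cc.tbg - 1 → ∀ j, j ≤ cc.tbg - 1 → ∀ h, h ≤ cc.tbg - 1 →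
      (Del i j h) ^ 2 ≤ lam i j h * rho i j h) := by
  have hb : (0 : ℝ) < Fintype.card β := Nat.cast_pos.2 Fintype.card_pos
  have hg : (0 : ℝ) < Fintype.card γ := Nat.cast_pos.2 Fintype.card_pos
  have htb := sb.tbg_le_tb_add_one
  have htg := sb.tbg_le_tg_add_one
  refine ⟨fun i hi j hj h hh => ?_, fun i hi j hj h hh => ?_, fun i hi j hj h hh => ?_⟩
  · exact nonneg_of_hadamard_eq_smul_sum sb.L_mul_L (fun _ => sb.L_transpose) hi hj hh
      (sb.L_indep.ne_zero ⟨h, Nat.lt_succ_of_le hh⟩) (inv_pos.2 hb) (hlam i hi j hj)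
  · exact nonneg_of_hadamard_eq_smul_sum sb.R_mul_R (fun _ => sb.R_transpose) hi hj hh
      (sb.R_indep.ne_zero ⟨h, Nat.lt_succ_of_le hh⟩) (inv_pos.2 hg) (hrho i hi j hj)
  · have hhb : h ≤ cc.tb := by omega
    have key := sb.sq_trace_hadamard_D_le hi hj hh
    rw [hDel i hi j hj, sb.trace_smul_sum_D_mul_transpose hh,
      hlam i (by omega) j (by omega),
      trace_smul_sum_mul_transpose_of_orthogonal sb.L_mul_L (fun _ => sb.L_transpose) hhb,
      hrho i (by omega) j (by omega),
      trace_smul_sum_mul_transpose_of_orthogonal sb.R_mul_R (fun _ => sb.R_transpose)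
        (by omega), sb.trace_R hh] at key
    exact sq_le_mul_of_scaled_sq_le hb hg (trace_pos_of_orthogonal sb.L_mul_L
      (fun _ => sb.L_transpose) hhb (sb.L_indep.ne_zero ⟨h, Nat.lt_succ_of_le hhb⟩)).ne' key
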